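/- Let f : X → X be continuous on a compact metric space and suppose N₀ ⊆ N₁ ⊆ X are compact sets with f(Nᵢ) ⊆ interior(Nᵢ) for i = 0,1. Then the induced index map f_P : N₁/N₀ → N₁/N₀ (defined by f_P(x) = f(x) if x, f(x) ∈ N₁ \ N₀ and f_P(x) = [N₀] otherwise) is continuous. -/
import Mathlib


/-- The setoid on the subtype `N₁` collapsing all points of `N₀` to a single
point (the pointed quotient `N₁/N₀`). -/
def collapseSetoid {α : Type*} [TopologicalSpace α] (N₀ N₁ : Set α) : Setoid N₁ where
  r a b := a = b ∨ ((a : α) ∈ N₀ ∧ (b : α) ∈ N₀)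
  iseqv := ⟨fun _ => Or.inl rfl,
    fun h => h.elim (fun h' => Or.inl h'.symm) (fun h' => Or.inr ⟨h'.2, h'.1⟩),
    fun h₁ h₂ => by
      rcases h₁ with h₁ | h₁
      · rcases h₂ with h₂ | h₂
        · exact Or.inl (h₁.trans h₂)
        · exact Or.inr ⟨h₁ ▸ h₂.1, h₂.2⟩
      · rcases h₂ with h₂ | h₂
        · exact Or.inr ⟨h₁.1, h₂ ▸ h₁.2⟩
        · exact Or.inr ⟨h₁.1, h₂.2⟩⟩

/-- For nested attracting blocks `N₀ ⊆ N₁` of a continuous map `f` on a compact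
metric space, the induced index map `f_P` on the pointed quotient `N₁/N₀`
(sending `⟦x⟧` to `⟦f x⟧` when both `x` and `f x` lie in `N₁ \ N₀`, and to the
basepoint `[N₀]` otherwise) is continuous. -/
theorem index_map_continuous {α : Type*} [MetricSpace α] [CompactSpace α]
    (f : α → α) (hf : Continuous f)
    (N₀ N₁ : Set α) (h01 : N₀ ⊆ N₁)
    (hN₀ : IsCompact N₀) (hN₁ : IsCompact N₁)
    (hfN₀ : f '' N₀ ⊆ interior N₀) (hfN₁ : f '' N₁ ⊆ interior N₁)
    (p : α) (hp : p ∈ N₀)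
    (fP : Quotient (collapseSetoid N₀ N₁) → Quotient (collapseSetoid N₀ N₁))
    (hfP₁ : ∀ (x : N₁) (hfx : f (x : α) ∈ N₁),
      (x : α) ∉ N₀ → f (x : α) ∉ N₀ →
      fP (Quotient.mk (collapseSetoid N₀ N₁) x) =
        Quotient.mk (collapseSetoid N₀ N₁) ⟨f (x : α), hfx⟩)
    (hfP₂ : ∀ x : N₁, ((x : α) ∈ N₀ ∨ f (x : α) ∉ N₁ \ N₀) →
      fP (Quotient.mk (collapseSetoid N₀ N₁) x) =
        Quotient.mk (collapseSetoid N₀ N₁) ⟨p, h01 hp⟩) :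
    Continuous fP := by
  have hfx : ∀ x : N₁, f (x : α) ∈ N₁ := fun x =>
    interior_subset (hfN₁ ⟨x, x.2, rfl⟩)
  have key : ∀ x : N₁,
      fP (Quotient.mk (collapseSetoid N₀ N₁) x) =
        Quotient.mk (collapseSetoid N₀ N₁) ⟨f (x : α), hfx x⟩ := by
    intro x
    by_cases hx0 : (x : α) ∈ N₀
    · rw [hfP₂ x (Or.inl hx0)]
      exact Quotient.sound (Or.inr ⟨hp, interior_subset (hfN₀ ⟨x, hx0, rfl⟩)⟩)
    · by_cases hfx0 : f (x : α) ∈ N₀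
      · rw [hfP₂ x (Or.inr fun h => h.2 hfx0)]
        exact Quotient.sound (Or.inr ⟨hp, hfx0⟩)
      · exact hfP₁ x (hfx x) hx0 hfx0
  letI := collapseSetoid N₀ N₁
  have hq : Topology.IsQuotientMap (Quotient.mk (collapseSetoid N₀ N₁)) :=
    isQuotientMap_quotient_mk'
  rw [hq.continuous_iff]
  have : fP ∘ Quotient.mk (collapseSetoid N₀ N₁) =
      (Quotient.mk (collapseSetoid N₀ N₁)) ∘
        (fun x : N₁ => (⟨f (x : α), hfx x⟩ : N₁)) := by
    funext x; exact key x
  rw [this]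
  exact continuous_quotient_mk'.comp
    (Continuous.subtype_mk (hf.comp continuous_subtype_val) _)
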